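/- Let S and T be monoids with zeros and λ₂ ≥ λ₁ ≥ 1 cardinals. Let σ : B⁰_{λ₁}(S) → B⁰_{λ₂}(T) be a non-trivial homomorphism. Suppose T does not contain a copy of the semigroup of I_{λ₁} × I_{λ₁}-matrix units, and T does not contain a copy of the semigroup of 2×2-matrix units B₂ whose zero is the zero of T. Then the image under σ of the zero of B⁰_{λ₁}(S) is the zero of B⁰_{λ₂}(T). -/

import Mathlib

attribute [local instance] Classical.propDecidable

/-- The Brandt `λ⁰`-extension of a semigroup `S` with zero, with index set `I`:
its elements are `0` (encoded `none`) and triples `(α, s, β)` with `s ≠ 0`. -/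
def Brandt (I S : Type*) [Zero S] : Type _ := Option (I × {s : S // s ≠ 0} × I)

instance brandtZero {I S : Type*} [Zero S] : Zero (Brandt I S) := ⟨none⟩

/-- Multiplication on the Brandt `λ⁰`-extension. -/
noncomputable def brandtMul {I S : Type*} [Zero S] [Mul S] :
    Brandt I S → Brandt I S → Brandt I S
  | some (α, a, β), some (γ, b, δ) =>
      if h : β = γ ∧ a.1 * b.1 ≠ 0 then some (α, ⟨a.1 * b.1, h.2⟩, δ) else none
  | _, _ => none

noncomputable instance brandtMulInst {I S : Type*} [Zero S] [Mul S] :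
    Mul (Brandt I S) := ⟨brandtMul⟩

/-- The semigroup of `I × I`-matrix units. -/
def MatrixUnits (I : Type*) := Option (I × I)

instance muZero {I : Type*} : Zero (MatrixUnits I) := ⟨none⟩

noncomputable instance muMul {I : Type*} : Mul (MatrixUnits I) :=
  ⟨fun x y => match x, y with
    | some (a, b), some (c, d) => if b = c then some (a, d) else none
    | _, _ => none⟩

/-- The subset of `Brandt I S` induced by a subset `T ⊆ S`
(the Brandt extension of `T` inside that of `S`). -/
def brandtSet {I S : Type*} [Zero S] (T : Set S) : Set (Brandt I S) :=
  {z | z = 0 ∨ ∃ (α β : I) (s : {s : S // s ≠ 0}), s.1 ∈ T ∧ z = some (α, s, β)}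

/-- The map `B⁰_{λ₁}(S) → B⁰_{λ₂}(T)` induced by `h : S → T`, an index map `φ`
and families `u`, `v` (`v` playing the role of `a ↦ u(a)⁻¹`):
`(α,s,β) ↦ (φ α, u α · h s · v β, φ β)` when the middle entry is nonzero, else `0`. -/
noncomputable def brandtHomMap {I₁ I₂ S T : Type*} [Zero S] [Zero T] [Mul T]
    (φ : I₁ → I₂) (u v : I₁ → T) (h : S → T) : Brandt I₁ S → Brandt I₂ T
  | some (a, s, b) =>
      if hh : u a * h s.1 * v b ≠ 0 then
        some (φ a, ⟨u a * h s.1 * v b, hh⟩, φ b) else none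
  | none => none

/-- The canonical copy of `S` in `Brandt I S` at index `α` (the set `S_{α,α}`). -/
noncomputable def brandtIncl {I S : Type*} [Zero S] (α : I) : S → Brandt I S :=
  fun s => if h : s = 0 then 0 else some (α, ⟨s, h⟩, α)

/-! Since `σ 0` absorbs every value of `σ`, a nonzero `σ 0 = (α, e, β)` forces all of `σ` into
the diagonal corner `{β} × T × {β}`, so the middle entry of `σ` is a semigroup homomorphism
`B⁰_λ(S) → T`. Restricted to the matrix units `(a, 1, b)` it is injective, since the matrix units
form a congruence-free semigroup and it cannot be constant: a homomorphism out of `B⁰_λ(S)` that is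
constant on the matrix units is constant, because `(c, s, d) = (c, 1, c) · (c, s, d)`. -/

namespace MatrixUnits

variable {I M : Type*} [Mul M]

abbrev mk (a b : I) : MatrixUnits I := some (a, b)

protected theorem zero_mul (x : MatrixUnits I) : 0 * x = 0 := by
  rcases x with _ | ⟨a, b⟩ <;> rfl

protected theorem mul_zero (x : MatrixUnits I) : x * 0 = 0 := by
  rcases x with _ | ⟨a, b⟩ <;> rfl

theorem mk_mul_mk_self (a b d : I) :
    (mk a b * mk b d : MatrixUnits I) = mk a d :=
  if_pos rfl

theorem mk_mul_mk_of_ne {b c : I} (a d : I) (h : b ≠ c) :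
    (mk a b * mk c d : MatrixUnits I) = 0 :=
  if_neg h

theorem map_eq_map_zero_of_map_mk_eq (f : MatrixUnits I →ₙ* M) {a b : I}
    (h : f (mk a b) = f 0) (x : MatrixUnits I) : f x = f 0 := by
  rcases x with _ | ⟨c, d⟩
  · rfl
  · calc f (mk c d) = f (mk c a * (mk a b * mk b d)) := by
          rw [mk_mul_mk_self, mk_mul_mk_self]
      _ = f (mk c a * (0 * mk b d)) := by simp only [map_mul, h]
      _ = f 0 := by rw [MatrixUnits.zero_mul, MatrixUnits.mul_zero]

theorem injective_or_forall_map_eq_map_zero (f : MatrixUnits I →ₙ* M) :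
    Function.Injective f ∨ ∀ x, f x = f 0 := by
  refine or_iff_not_imp_left.2 fun hf => ?_
  obtain ⟨x, y, hxy, hne⟩ : ∃ x y, f x = f y ∧ x ≠ y := by
    simpa [Function.Injective] using hf
  suffices ∃ a b, f (mk a b) = f 0 from
    let ⟨_, _, h⟩ := this
    map_eq_map_zero_of_map_mk_eq f h
  rcases x with _ | ⟨a, b⟩ <;> rcases y with _ | ⟨c, d⟩
  · exact absurd rfl hne
  · exact ⟨c, d, hxy.symm⟩
  · exact ⟨a, b, hxy⟩
  · refine ⟨a, b, ?_⟩
    by_cases hac : a = c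
    · have hbd : d ≠ b := fun hdb => hne (by rw [hac, hdb])
      calc f (mk a b) = f (mk a b * mk b b) := by rw [mk_mul_mk_self]
        _ = f (mk c d * mk b b) := by simp only [map_mul, hxy]
        _ = f 0 := by rw [mk_mul_mk_of_ne c b hbd]
    · calc f (mk a b) = f (mk a a * mk a b) := by rw [mk_mul_mk_self]
        _ = f (mk a a * mk c d) := by simp only [map_mul, hxy]
        _ = f 0 := by rw [mk_mul_mk_of_ne a d hac]

end MatrixUnits

namespace Brandt

variable {I S : Type*}

abbrev mk [Zero S] (α : I) (s : {s : S // s ≠ 0}) (β : I) : Brandt I S := some (α, s, β)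

instance [Zero S] [Subsingleton S] : Subsingleton (Brandt I S) :=
  ⟨fun
    | none, none => rfl
    | some (_, s, _), _ | _, some (_, s, _) => absurd (Subsingleton.elim _ _) s.2⟩

section Mul

variable [Zero S] [Mul S]

protected theorem zero_mul (x : Brandt I S) : 0 * x = 0 := by
  rcases x with _ | ⟨a, s, b⟩ <;> rfl

protected theorem mul_zero (x : Brandt I S) : x * 0 = 0 := by
  rcases x with _ | ⟨a, s, b⟩ <;> rfl

theorem mk_mul_mk (α β γ δ : I) (a b : {s : S // s ≠ 0}) :
    (mk α a β * mk γ b δ : Brandt I S) =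
      if h : β = γ ∧ a.1 * b.1 ≠ 0 then mk α ⟨a.1 * b.1, h.2⟩ δ else 0 :=
  rfl

theorem exists_eq_mk_diag_of_mk_mul_eq {α β : I} {e : {s : S // s ≠ 0}} {x : Brandt I S}
    (h : mk α e β * x = mk α e β) : ∃ s, x = mk β s β := by
  rcases x with _ | ⟨γ, s, δ⟩
  · exact absurd h (Option.some_ne_none _).symm
  · rw [mk_mul_mk] at h
    split_ifs at h with hγ
    have hδ : δ = β := (Prod.mk.inj (Prod.mk.inj (Option.some_injective _ h)).2).2
    exact ⟨s, by rw [hδ, ← hγ.1]⟩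

theorem val_mul_val_eq_of_mk_mul_mk_eq {β : I} {s t u : {s : S // s ≠ 0}}
    (h : (mk β s β * mk β t β : Brandt I S) = mk β u β) :
    s.1 * t.1 = u.1 := by
  rw [mk_mul_mk] at h
  split_ifs at h
  exact congrArg Subtype.val (Prod.mk.inj (Prod.mk.inj (Option.some_injective _ h)).2).1

end Mul

section MatrixUnits

variable [MulZeroOneClass S] [Nontrivial S]

noncomputable def ofMatrixUnits : MatrixUnits I →ₙ* Brandt I S where
  toFun
    | none => 0
    | some (a, b) => mk a ⟨1, one_ne_zero⟩ b
  map_mul'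
    | none, _ => (Brandt.zero_mul _).symm
    | some _, none => (Brandt.mul_zero _).symm
    | some (a, b), some (c, d) => by
      by_cases hbc : b = c
      · subst hbc
        rw [MatrixUnits.mk_mul_mk_self]
        simp [mk_mul_mk]
      · rw [MatrixUnits.mk_mul_mk_of_ne a d hbc]
        simp [mk_mul_mk, hbc]

theorem ofMatrixUnits_mk_mul_mk (c d : I) (s : {s : S // s ≠ 0}) :
    ofMatrixUnits (MatrixUnits.mk c c) * (mk c s d : Brandt I S) = mk c s d := by
  simp [ofMatrixUnits, mk_mul_mk, s.2]

theorem map_eq_map_zero_of_map_ofMatrixUnits_eq {M : Type*} [Mul M] (g : Brandt I S →ₙ* M)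
    (h : ∀ m, g (ofMatrixUnits m) = g 0) (x : Brandt I S) : g x = g 0 := by
  rcases x with _ | ⟨c, s, d⟩
  · rfl
  · calc g (mk c s d) = g (ofMatrixUnits (MatrixUnits.mk c c) * mk c s d) := by
          rw [ofMatrixUnits_mk_mul_mk]
      _ = g (0 * mk c s d) := by simp only [map_mul, h]
      _ = g 0 := by rw [Brandt.zero_mul]

end MatrixUnits

end Brandt

theorem brandt_hom_zero_to_zero_general {I J S T : Type*} [MonoidWithZero S] [MonoidWithZero T]
    (σ : Brandt I S → Brandt J T) (hmul : ∀ x y, σ (x * y) = σ x * σ y)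
    (hnt : ∃ x y, σ x ≠ σ y)
    (hno1 : ¬∃ f : MatrixUnits I → T,
        Function.Injective f ∧ ∀ x y, f (x * y) = f x * f y) :
    σ 0 = 0 := by
  obtain ⟨x₀, y₀, hne⟩ := hnt
  rcases subsingleton_or_nontrivial S with hS | hS
  · exact absurd (congrArg σ (Subsingleton.elim x₀ y₀)) hne
  by_contra h0
  obtain ⟨⟨α, e, β⟩, hσ0⟩ := Option.ne_none_iff_exists.1 h0
  have hdiag (x : Brandt I S) : ∃ s, σ x = Brandt.mk β s β :=
    Brandt.exists_eq_mk_diag_of_mk_mul_eq (α := α) (e := e)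
      (by rw [show Brandt.mk α e β = σ 0 from hσ0, ← hmul, Brandt.zero_mul])
  choose g hg using hdiag
  let gT : Brandt I S →ₙ* T :=
    { toFun x := (g x).1
      map_mul' x y := (Brandt.val_mul_val_eq_of_mk_mul_mk_eq (by
        rw [← hg, ← hg, ← hmul, hg])).symm }
  have hconst := (MatrixUnits.injective_or_forall_map_eq_map_zero
    (gT.comp Brandt.ofMatrixUnits)).resolve_left fun hinj => hno1 ⟨_, hinj, map_mul _⟩
  have hgT := Brandt.map_eq_map_zero_of_map_ofMatrixUnits_eq gT hconst
  exact hne (by rw [hg x₀, hg y₀, Subtype.ext ((hgT x₀).trans (hgT y₀).symm)])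

/-- If `T` contains no copy of the `I × I`-matrix units and no copy
of the `2 × 2`-matrix units with zero the zero of `T`, then every non-trivial
homomorphism `σ : B⁰_{λ₁}(S) → B⁰_{λ₂}(T)` sends zero to zero. -/
theorem brandt_hom_zero_to_zero {I J S T : Type*} [MonoidWithZero S] [MonoidWithZero T]
    [Nonempty I] (ι : I ↪ J)
    (σ : Brandt I S → Brandt J T) (hmul : ∀ x y, σ (x * y) = σ x * σ y)
    (hnt : ∃ x y, σ x ≠ σ y)
    (hno1 : ¬∃ f : MatrixUnits I → T,
        Function.Injective f ∧ ∀ x y, f (x * y) = f x * f y)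
    (hno2 : ¬∃ f : MatrixUnits (Fin 2) → T,
        Function.Injective f ∧ (∀ x y, f (x * y) = f x * f y) ∧ f 0 = 0) :
    σ 0 = 0 :=
  brandt_hom_zero_to_zero_general σ hmul hnt hno1
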